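/- arXiv:1908.04137 — 2 statements merged into one kernel-verified Lean document; each statement's English description precedes it below -/
import Mathlib

section
/- Let M = (E, rk, m) be an arithmetic matroid whose dual M* satisfies the gcd property. Then for every independent set I ⊆ E, m(I) = gcd{ m(B) : B a basis of M with I ⊆ B }. -/
open scoped Classical

section Arithmat

variable {E : Type*} [Fintype E] [DecidableEq E]

/-- The rank function axioms of a matroid on ground set `E`. -/
def IsRankFn (rk : Finset E → ℕ) : Prop :=
  (∀ X : Finset E, rk X ≤ X.card) ∧
  (∀ X Y : Finset E, rk (X ∪ Y) + rk (X ∩ Y) ≤ rk X + rk Y) ∧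
  (∀ (X : Finset E) (e : E), rk X ≤ rk (insert e X) ∧ rk (insert e X) ≤ rk X + 1)

/-- `B` is a basis of the matroid: `|B| = rk B = rk E`. -/
def IsBasis (rk : Finset E → ℕ) (B : Finset E) : Prop :=
  B.card = rk B ∧ rk B = rk (Finset.univ : Finset E)

/-- `(X, X ⊔ T ⊔ F)` is a molecule: `X`, `T`, `F` are pairwise disjoint and
`rk Z = rk X + |Z ∩ F|` for every `Z` with `X ⊆ Z ⊆ X ∪ T ∪ F`. -/
def IsMolecule (rk : Finset E → ℕ) (X T F : Finset E) : Prop :=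
  Disjoint X T ∧ Disjoint X F ∧ Disjoint T F ∧
  ∀ Z : Finset E, X ⊆ Z → Z ⊆ X ∪ T ∪ F → rk Z = rk X + (Z ∩ F).card

/-- Axiom (A1) of (quasi-)arithmetic matroids. -/
def AxiomA1 (rk m : Finset E → ℕ) : Prop :=
  ∀ (X : Finset E) (e : E),
    (rk (insert e X) = rk X → m (insert e X) ∣ m X) ∧
    (rk (insert e X) ≠ rk X → m X ∣ m (insert e X))

/-- Axiom (A2) of (quasi-)arithmetic matroids. -/
def AxiomA2 (rk m : Finset E → ℕ) : Prop :=
  ∀ X T F : Finset E, IsMolecule rk X T F →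
    m X * m (X ∪ T ∪ F) = m (X ∪ T) * m (X ∪ F)

/-- Axiom (P) of arithmetic matroids.  The sign `(-1) ^ (|X ∪ F| - |S|)` is
expressed as `(-1) ^ (|X ∪ F| + |S|)`, which has the same parity. -/
def AxiomP (rk m : Finset E → ℕ) : Prop :=
  ∀ X T F : Finset E, IsMolecule rk X T F →
    0 ≤ ∑ S ∈ Finset.Icc X (X ∪ T ∪ F), (-1 : ℤ) ^ ((X ∪ F).card + S.card) * (m S : ℤ)

/-- A quasi-arithmetic matroid: a matroid rank function together with a positive
multiplicity function satisfying (A1) and (A2). -/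
def IsQuasiArithmeticMatroid (rk m : Finset E → ℕ) : Prop :=
  IsRankFn rk ∧ (∀ X : Finset E, 0 < m X) ∧ AxiomA1 rk m ∧ AxiomA2 rk m

/-- An arithmetic matroid: a matroid rank function together with a positive
multiplicity function satisfying (A1), (A2) and (P). -/
def IsArithmeticMatroid (rk m : Finset E → ℕ) : Prop :=
  IsRankFn rk ∧ (∀ X : Finset E, 0 < m X) ∧ AxiomA1 rk m ∧ AxiomA2 rk m ∧ AxiomP rk m

/-- The gcd property: `m X = gcd { m I : I ⊆ X, |I| = rk I = rk X }`. -/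
def GcdProperty (rk m : Finset E → ℕ) : Prop :=
  ∀ X : Finset E,
    m X = (X.powerset.filter (fun I => I.card = rk I ∧ rk I = rk X)).gcd m

/-- The strong gcd property: `m X = gcd { m B : B basis, |B ∩ X| = rk X }`. -/
def StrongGcdProperty (rk m : Finset E → ℕ) : Prop :=
  ∀ X : Finset E,
    m X = ((Finset.univ : Finset (Finset E)).filter
      (fun B => IsBasis rk B ∧ (B ∩ X).card = rk X)).gcd m

/-- The rank function of the dual matroid: `rk* X = |X| - rk E + rk (E \ X)`. -/
def dualRk (rk : Finset E → ℕ) : Finset E → ℕ :=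
  fun X => X.card + rk Xᶜ - rk (Finset.univ : Finset E)

/-- The multiplicity function of the dual arithmetic matroid: `m* X = m (E \ X)`. -/
def dualM (m : Finset E → ℕ) : Finset E → ℕ := fun X => m Xᶜ

/-- The set of bases of the matroid, as a `Finset`. -/
noncomputable def basesFinset (rk : Finset E → ℕ) : Finset (Finset E) :=
  (Finset.univ : Finset (Finset E)).filter (IsBasis rk)

/-- The multiplicity function of the reduction:
`m̄ X = gcd { m B : B basis, rk X = |X ∩ B| } / gcd { m B : B basis }`. -/
noncomputable def reducedM (rk m : Finset E → ℕ) : Finset E → ℕ := fun X =>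
  ((basesFinset rk).filter (fun B => (X ∩ B).card = rk X)).gcd m /
    (basesFinset rk).gcd m

/-- `B_(X,Y)`: the set of pairs `(B₁, B₂)` of bases with `rk X = |X ∩ B₁|` and
`rk Y = |Y ∩ B₂|`. -/
def BasisPairs (rk : Finset E → ℕ) (X Y : Finset E) : Set (Finset E × Finset E) :=
  {p | IsBasis rk p.1 ∧ IsBasis rk p.2 ∧ rk X = (X ∩ p.1).card ∧ rk Y = (Y ∩ p.2).card}

end Arithmat


private lemma rk_union_bounds {E : Type*} [Fintype E] [DecidableEq E]
    {rk : Finset E → ℕ} (h : IsRankFn rk) (X s : Finset E) :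
    rk X ≤ rk (X ∪ s) ∧ rk (X ∪ s) ≤ rk X + s.card := by
  induction s using Finset.induction_on with
  | empty => simp
  | @insert a s ha ih =>
    rcases ih with ⟨ih1, ih2⟩
    have h3 := h.2.2 (X ∪ s) a
    have : X ∪ insert a s = insert a (X ∪ s) := by
      ext x; simp [or_left_comm, or_comm, or_assoc]
    rw [this, Finset.card_insert_of_notMem ha]
    omega

private lemma rk_mono {E : Type*} [Fintype E] [DecidableEq E]
    {rk : Finset E → ℕ} (h : IsRankFn rk) {X Y : Finset E} (hXY : X ⊆ Y) :
    rk X ≤ rk Y := by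
  have := (rk_union_bounds h X (Y \ X)).1
  rwa [Finset.union_sdiff_of_subset hXY] at this

private lemma rk_le_add {E : Type*} [Fintype E] [DecidableEq E]
    {rk : Finset E → ℕ} (h : IsRankFn rk) {X Y : Finset E} (hXY : X ⊆ Y) :
    rk Y ≤ rk X + (Y \ X).card := by
  have := (rk_union_bounds h X (Y \ X)).2
  rwa [Finset.union_sdiff_of_subset hXY] at this

/-- Let `M = (E, rk, m)` be an arithmetic matroid whose dual `M*`
satisfies the gcd property.  Then for every independent set `I ⊆ E`,
`m I = gcd { m B : B a basis of M with I ⊆ B }`. -/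
theorem dual_gcd_independent_sets {E : Type*} [Fintype E] [DecidableEq E]
    (rk m : Finset E → ℕ) (hM : IsArithmeticMatroid rk m)
    (hdual : GcdProperty (dualRk rk) (dualM m))
    (I : Finset E) (hI : I.card = rk I) :
    m I = ((Finset.univ : Finset (Finset E)).filter
      (fun B => IsBasis rk B ∧ I ⊆ B)).gcd m := by
  have hrk := hM.1
  have key : (Iᶜ.powerset.filter
      (fun J => J.card = dualRk rk J ∧ dualRk rk J = dualRk rk Iᶜ)) =
      ((Finset.univ : Finset (Finset E)).filter
        (fun B => IsBasis rk B ∧ I ⊆ B)).image (·ᶜ) := by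
    have hEcard : (Finset.univ : Finset E).card = Fintype.card E := Finset.card_univ
    have hrkle : rk (Finset.univ : Finset E) ≤ Fintype.card E := by
      have := hrk.1 (Finset.univ : Finset E); omega
    ext J
    simp only [Finset.mem_filter, Finset.mem_powerset, Finset.mem_image,
      Finset.mem_univ, true_and]
    constructor
    · rintro ⟨hJI, h1, h2⟩
      refine ⟨Jᶜ, ⟨?_, ?_⟩, compl_compl J⟩
      · -- IsBasis rk Jᶜ
        have ha : rk Jᶜ ≤ rk (Finset.univ : Finset E) :=
          rk_mono hrk (Finset.subset_univ _)
        have hb : rk (Finset.univ : Finset E) ≤ rk Jᶜ + J.card := by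
          have := rk_le_add hrk (Finset.subset_univ Jᶜ)
          have hd : (Finset.univ : Finset E) \ Jᶜ = J := by
            simp [Finset.sdiff_eq_inter_compl]
          rw [hd] at this; exact this
        have hJc : Jᶜ.card = Fintype.card E - J.card := Finset.card_compl J
        have hIc : Iᶜ.card = Fintype.card E - I.card := Finset.card_compl I
        have hJle : J.card ≤ Fintype.card E := J.card_le_univ
        have hIle : I.card ≤ Fintype.card E := I.card_le_univ
        have hIcc : Iᶜᶜ = I := compl_compl I
        simp only [dualRk, hIcc] at h1 h2
        constructor <;> omega
      · -- I ⊆ Jᶜ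
        intro x hx
        simp only [Finset.mem_compl]
        intro hxJ
        have := hJI hxJ
        simp [Finset.mem_compl] at this
        exact this hx
    · rintro ⟨B, ⟨⟨hB1, hB2⟩, hIB⟩, rfl⟩
      have hBc : Bᶜ.card = Fintype.card E - B.card := Finset.card_compl B
      have hIc : Iᶜ.card = Fintype.card E - I.card := Finset.card_compl I
      have hBle : B.card ≤ Fintype.card E := B.card_le_univ
      have hIle : I.card ≤ Fintype.card E := I.card_le_univ
      have hBcc : Bᶜᶜ = B := compl_compl B
      have hIcc : Iᶜᶜ = I := compl_compl I
      refine ⟨?_, ?_, ?_⟩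
      · intro x hx
        simp only [Finset.mem_compl] at hx ⊢
        intro hxI; exact hx (hIB hxI)
      · simp only [dualRk, hBcc]; omega
      · simp only [dualRk, hBcc, hIcc]; omega
  have h := hdual Iᶜ
  rw [key] at h
  have : dualM m Iᶜ = m I := by simp [dualM]
  rw [this] at h
  rw [h, Finset.gcd_image]
  · apply Finset.gcd_congr rfl
    intro B hB
    simp [dualM]
end

section
/- Let (E, rk) be a matroid and let (X,Y) be a molecule with decomposition Y = X ⊔ T ⊔ F. Then the map φ(B₁, B₂) = ( (B₁ ∖ X) ∪ (B₂ ∩ (X ∪ T)), (B₂ ∖ (X ∪ T)) ∪ (B₁ ∩ X) ) is a well-defined bijection from B_{(X,Y)} to B_{(X ∪ T, X ∪ F)}, with inverse ψ(B₃, B₄) = ( (B₃ ∖ (X ∪ T)) ∪ (B₄ ∩ X), (B₄ ∖ X) ∪ (B₃ ∩ (X ∪ T)) ). -/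
open scoped Classical

section MoleculeHelpers

variable {E : Type*} [Fintype E] [DecidableEq E] {rk : Finset E → ℕ}

lemma rk_union_mono (hrk : IsRankFn rk) (A D : Finset E) : rk A ≤ rk (A ∪ D) := by
  induction D using Finset.induction_on with
  | empty => simp
  | @insert a D ha ih =>
    have h := (hrk.2.2 (A ∪ D) a).1
    rw [Finset.union_insert] at *
    exact le_trans ih h

lemma rk_mono_s7 (hrk : IsRankFn rk) {A B : Finset E} (h : A ⊆ B) : rk A ≤ rk B := by
  have := rk_union_mono hrk A B
  rwa [Finset.union_eq_right.mpr h] at this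

lemma rk_union_card_le (hrk : IsRankFn rk) (A D : Finset E) :
    rk (A ∪ D) ≤ rk A + D.card := by
  induction D using Finset.induction_on with
  | empty => simp
  | @insert a D ha ih =>
    have h := (hrk.2.2 (A ∪ D) a).2
    rw [Finset.union_insert]
    rw [Finset.card_insert_of_notMem ha]
    omega

lemma rk_basis_subset (hrk : IsRankFn rk) {B A : Finset E} (hB : IsBasis rk B)
    (hA : A ⊆ B) : rk A = A.card := by
  have h1 : rk A ≤ A.card := hrk.1 A
  have h2 : rk B ≤ rk A + (B \ A).card := by
    have := rk_union_card_le hrk A (B \ A)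
    rwa [Finset.union_sdiff_of_subset hA] at this
  have h3 : (B \ A).card + A.card = B.card := Finset.card_sdiff_add_card_eq_card hA
  have h4 : B.card = rk B := hB.1
  omega

lemma rk_union_congr (hrk : IsRankFn rk) {C S : Finset E} (hCS : C ⊆ S)
    (h : rk C = rk S) (A : Finset E) : rk (A ∪ C) = rk (A ∪ S) := by
  have hle : rk (A ∪ C) ≤ rk (A ∪ S) :=
    rk_mono_s7 hrk (Finset.union_subset_union_right hCS)
  have hsub := hrk.2.1 (A ∪ C) S
  have e1 : (A ∪ C) ∪ S = A ∪ S := by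
    rw [Finset.union_assoc, Finset.union_eq_right.mpr hCS]
  have e2 : rk C ≤ rk ((A ∪ C) ∩ S) :=
    rk_mono_s7 hrk (Finset.subset_inter Finset.subset_union_right hCS)
  rw [e1] at hsub
  omega

lemma newBasis (hrk : IsRankFn rk) {B C S : Finset E} (hB : IsBasis rk B)
    (hCS : C ⊆ S) (hcard : C.card = (B ∩ S).card) (hrkC : rk C = rk S) :
    IsBasis rk ((B \ S) ∪ C) := by
  have hdisj : Disjoint (B \ S) C :=
    Finset.disjoint_left.mpr fun a ha hc => (Finset.mem_sdiff.mp ha).2 (hCS hc)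
  have hcard2 : ((B \ S) ∪ C).card = B.card := by
    rw [Finset.card_union_of_disjoint hdisj, hcard]
    have : (B \ S).card + (B ∩ S).card = B.card := B.card_sdiff_add_card_inter S
    omega
  have hrk1 : rk ((B \ S) ∪ C) = rk ((B \ S) ∪ S) := rk_union_congr hrk hCS hrkC _
  have hBsub : B ⊆ (B \ S) ∪ S := by
    intro a ha
    by_cases h : a ∈ S
    · exact Finset.mem_union_right _ h
    · exact Finset.mem_union_left _ (Finset.mem_sdiff.mpr ⟨ha, h⟩)
  have hge : rk (Finset.univ : Finset E) ≤ rk ((B \ S) ∪ C) := by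
    rw [hrk1]
    calc rk (Finset.univ : Finset E) = rk B := hB.2.symm
    _ ≤ rk ((B \ S) ∪ S) := rk_mono_s7 hrk hBsub
  have hle : rk ((B \ S) ∪ C) ≤ rk (Finset.univ : Finset E) :=
    rk_mono_s7 hrk (Finset.subset_univ _)
  have hcardle : rk ((B \ S) ∪ C) ≤ ((B \ S) ∪ C).card := hrk.1 _
  constructor
  · rw [hcard2, hB.1, hB.2]; omega
  · omega

end MoleculeHelpers

set_option maxHeartbeats 1000000 in
/-- Let `(E, rk)` be a matroid and `(X, Y)` a molecule with
decomposition `Y = X ⊔ T ⊔ F`.  Then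
`φ(B₁, B₂) = ((B₁ \ X) ∪ (B₂ ∩ (X ∪ T)), (B₂ \ (X ∪ T)) ∪ (B₁ ∩ X))`
is a well-defined bijection from `B_(X,Y)` to `B_(X ∪ T, X ∪ F)`, with inverse
`ψ(B₃, B₄) = ((B₃ \ (X ∪ T)) ∪ (B₄ ∩ X), (B₄ \ X) ∪ (B₃ ∩ (X ∪ T)))`. -/
theorem molecule_basisPairs_bijection
    {E : Type*} [Fintype E] [DecidableEq E]
    (rk : Finset E → ℕ) (hrk : IsRankFn rk)
    (X T F : Finset E) (hmol : IsMolecule rk X T F) :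
    Set.BijOn
      (fun p : Finset E × Finset E =>
        ((p.1 \ X) ∪ (p.2 ∩ (X ∪ T)), (p.2 \ (X ∪ T)) ∪ (p.1 ∩ X)))
      (BasisPairs rk X (X ∪ T ∪ F)) (BasisPairs rk (X ∪ T) (X ∪ F)) ∧
    Set.InvOn
      (fun p : Finset E × Finset E =>
        ((p.1 \ (X ∪ T)) ∪ (p.2 ∩ X), (p.2 \ X) ∪ (p.1 ∩ (X ∪ T))))
      (fun p : Finset E × Finset E =>
        ((p.1 \ X) ∪ (p.2 ∩ (X ∪ T)), (p.2 \ (X ∪ T)) ∪ (p.1 ∩ X)))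
      (BasisPairs rk X (X ∪ T ∪ F)) (BasisPairs rk (X ∪ T) (X ∪ F)) := by
  obtain ⟨hXT, hXF, hTF, hZ⟩ := hmol
  have hXT' := Finset.disjoint_left.mp hXT
  have hXF' := Finset.disjoint_left.mp hXF
  have hTF' := Finset.disjoint_left.mp hTF
  have rkXT : rk (X ∪ T) = rk X := by
    have h := hZ (X ∪ T) Finset.subset_union_left Finset.subset_union_left
    have he : (X ∪ T) ∩ F = ∅ := by
      ext a
      simp only [Finset.mem_inter, Finset.mem_union, Finset.notMem_empty, iff_false]
      rintro ⟨h1 | h1, h2⟩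
      · exact hXF' h1 h2
      · exact hTF' h1 h2
    rw [he] at h; simpa using h
  have rkXF : rk (X ∪ F) = rk X + F.card := by
    have h := hZ (X ∪ F) Finset.subset_union_left
      (Finset.union_subset (Finset.subset_union_left.trans Finset.subset_union_left)
        Finset.subset_union_right)
    rwa [Finset.inter_eq_right.mpr Finset.subset_union_right] at h
  have rkY : rk (X ∪ T ∪ F) = rk X + F.card := by
    have h := hZ (X ∪ T ∪ F) (Finset.subset_union_left.trans Finset.subset_union_left)
      subset_rfl
    rwa [Finset.inter_eq_right.mpr Finset.subset_union_right] at h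
  -- a basis meeting X in rk X elements avoids T
  have factT : ∀ B : Finset E, IsBasis rk B → (X ∩ B).card = rk X → B ∩ T = ∅ := by
    intro B hB h1
    by_contra hne
    obtain ⟨t, ht⟩ := Finset.nonempty_iff_ne_empty.mpr hne
    rw [Finset.mem_inter] at ht
    have htX : t ∉ X ∩ B := fun h => hXT' (Finset.mem_inter.mp h).1 ht.2
    have hsub : insert t (X ∩ B) ⊆ B :=
      Finset.insert_subset ht.1 Finset.inter_subset_right
    have hrkA : rk (insert t (X ∩ B)) = (X ∩ B).card + 1 := by
      rw [rk_basis_subset hrk hB hsub, Finset.card_insert_of_notMem htX]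
    have hsub2 : insert t (X ∩ B) ⊆ X ∪ T :=
      Finset.insert_subset (Finset.mem_union_right _ ht.2)
        (Finset.inter_subset_left.trans Finset.subset_union_left)
    have := rk_mono_s7 hrk hsub2
    omega
  have factB2 : ∀ B : Finset E, IsBasis rk B → ((X ∪ T ∪ F) ∩ B).card = rk X + F.card →
      ((X ∪ T) ∩ B).card = rk X ∧ F ⊆ B := by
    intro B hB h2
    have ha : ((X ∪ T) ∩ B).card ≤ rk X := by
      have h1 : rk ((X ∪ T) ∩ B) = ((X ∪ T) ∩ B).card :=
        rk_basis_subset hrk hB Finset.inter_subset_right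
      have h2 : rk ((X ∪ T) ∩ B) ≤ rk (X ∪ T) := rk_mono_s7 hrk Finset.inter_subset_left
      omega
    have hb : (F ∩ B).card ≤ F.card := Finset.card_le_card Finset.inter_subset_left
    have hsplit : (X ∪ T ∪ F) ∩ B = ((X ∪ T) ∩ B) ∪ (F ∩ B) :=
      Finset.union_inter_distrib_right ..
    have hdisj : Disjoint ((X ∪ T) ∩ B) (F ∩ B) := by
      rw [Finset.disjoint_left]
      intro a h1 h2
      rw [Finset.mem_inter, Finset.mem_union] at h1
      rw [Finset.mem_inter] at h2
      rcases h1.1 with h | h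
      · exact hXF' h h2.1
      · exact hTF' h h2.1
    have hcards : ((X ∪ T) ∩ B).card + (F ∩ B).card = rk X + F.card := by
      rw [← Finset.card_union_of_disjoint hdisj, ← hsplit, h2]
    have hFB : (F ∩ B).card = F.card := by omega
    refine ⟨by omega, ?_⟩
    rw [← Finset.inter_eq_left]
    exact Finset.eq_of_subset_of_card_le Finset.inter_subset_left (le_of_eq hFB.symm)
  have factB4 : ∀ B : Finset E, IsBasis rk B → ((X ∪ F) ∩ B).card = rk X + F.card →
      (X ∩ B).card = rk X ∧ F ⊆ B ∧ B ∩ T = ∅ := by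
    intro B hB h4
    have ha : (X ∩ B).card ≤ rk X := by
      have h1 : rk (X ∩ B) = (X ∩ B).card :=
        rk_basis_subset hrk hB Finset.inter_subset_right
      have h2 : rk (X ∩ B) ≤ rk X := rk_mono_s7 hrk Finset.inter_subset_left
      omega
    have hb : (F ∩ B).card ≤ F.card := Finset.card_le_card Finset.inter_subset_left
    have hsplit : (X ∪ F) ∩ B = (X ∩ B) ∪ (F ∩ B) :=
      Finset.union_inter_distrib_right ..
    have hdisj : Disjoint (X ∩ B) (F ∩ B) := by
      rw [Finset.disjoint_left]
      intro a h1 h2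
      exact hXF' (Finset.mem_inter.mp h1).1 (Finset.mem_inter.mp h2).1
    have hcards : (X ∩ B).card + (F ∩ B).card = rk X + F.card := by
      rw [← Finset.card_union_of_disjoint hdisj, ← hsplit, h4]
    have hXB : (X ∩ B).card = rk X := by omega
    have hFB : (F ∩ B).card = F.card := by omega
    refine ⟨hXB, ?_, factT B hB hXB⟩
    rw [← Finset.inter_eq_left]
    exact Finset.eq_of_subset_of_card_le Finset.inter_subset_left (le_of_eq hFB.symm)
  -- maps-to for φ
  have mapsφ : Set.MapsTo
      (fun p : Finset E × Finset E =>
        ((p.1 \ X) ∪ (p.2 ∩ (X ∪ T)), (p.2 \ (X ∪ T)) ∪ (p.1 ∩ X)))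
      (BasisPairs rk X (X ∪ T ∪ F)) (BasisPairs rk (X ∪ T) (X ∪ F)) := by
    rintro ⟨B₁, B₂⟩ ⟨hB1, hB2, h1, h2⟩
    simp only at h1 h2 ⊢
    have h1' : (X ∩ B₁).card = rk X := h1.symm
    have h2' : ((X ∪ T ∪ F) ∩ B₂).card = rk X + F.card := by rw [← h2, rkY]
    have hT1 := factT B₁ hB1 h1'
    have hT1' : ∀ a, a ∈ B₁ → a ∉ T := fun a ha hT =>
      Finset.notMem_empty a (hT1 ▸ Finset.mem_inter.mpr ⟨ha, hT⟩)
    obtain ⟨h2a, hFB2⟩ := factB2 B₂ hB2 h2'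
    have hFB2' : ∀ a, a ∈ F → a ∈ B₂ := fun a ha => hFB2 ha
    have hB1sd : B₁ \ X = B₁ \ (X ∪ T) := by
      ext a
      simp only [Finset.mem_sdiff, Finset.mem_union]
      have := hT1' a
      tauto
    have hC1 : (B₂ ∩ (X ∪ T)).card = (B₁ ∩ (X ∪ T)).card := by
      have e1 : B₂ ∩ (X ∪ T) = (X ∪ T) ∩ B₂ := Finset.inter_comm ..
      have e2 : B₁ ∩ (X ∪ T) = X ∩ B₁ := by
        ext a
        simp only [Finset.mem_inter, Finset.mem_union]
        have := hT1' a
        tauto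
      rw [e1, e2, h2a, h1']
    have hB1' : IsBasis rk ((B₁ \ X) ∪ (B₂ ∩ (X ∪ T))) := by
      rw [hB1sd]
      refine newBasis hrk hB1 Finset.inter_subset_right hC1 ?_
      rw [rk_basis_subset hrk hB2 Finset.inter_subset_left]
      have e1 : B₂ ∩ (X ∪ T) = (X ∪ T) ∩ B₂ := Finset.inter_comm ..
      rw [e1, h2a, rkXT]
    have hC2card : (B₁ ∩ X).card = (B₂ ∩ (X ∪ T)).card := by
      rw [Finset.inter_comm, h1', Finset.inter_comm, h2a]
    have hB2' : IsBasis rk ((B₂ \ (X ∪ T)) ∪ (B₁ ∩ X)) := by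
      refine newBasis hrk hB2 (Finset.inter_subset_right.trans Finset.subset_union_left)
        hC2card ?_
      rw [rk_basis_subset hrk hB1 Finset.inter_subset_left, Finset.inter_comm, h1', rkXT]
    refine ⟨hB1', hB2', ?_, ?_⟩
    · have e : (X ∪ T) ∩ ((B₁ \ X) ∪ (B₂ ∩ (X ∪ T))) = (X ∪ T) ∩ B₂ := by
        ext a
        simp only [Finset.mem_inter, Finset.mem_union, Finset.mem_sdiff]
        have := hT1' a
        tauto
      rw [e, h2a, rkXT]
    · have e : (X ∪ F) ∩ ((B₂ \ (X ∪ T)) ∪ (B₁ ∩ X)) = (X ∩ B₁) ∪ F := by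
        ext a
        simp only [Finset.mem_inter, Finset.mem_union, Finset.mem_sdiff]
        have h1 := hFB2' a
        have h2 := hXF' (a := a)
        have h3 := hTF' (a := a)
        tauto
      have hd : Disjoint (X ∩ B₁) F :=
        Finset.disjoint_left.mpr fun a ha hf => hXF' (Finset.mem_inter.mp ha).1 hf
      rw [e, Finset.card_union_of_disjoint hd, h1', rkXF]
  -- maps-to for ψ
  have mapsψ : Set.MapsTo
      (fun p : Finset E × Finset E =>
        ((p.1 \ (X ∪ T)) ∪ (p.2 ∩ X), (p.2 \ X) ∪ (p.1 ∩ (X ∪ T))))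
      (BasisPairs rk (X ∪ T) (X ∪ F)) (BasisPairs rk X (X ∪ T ∪ F)) := by
    rintro ⟨B₃, B₄⟩ ⟨hB3, hB4, h3, h4⟩
    simp only at h3 h4 ⊢
    have h3' : ((X ∪ T) ∩ B₃).card = rk X := by rw [← h3, rkXT]
    have h4' : ((X ∪ F) ∩ B₄).card = rk X + F.card := by rw [← h4, rkXF]
    obtain ⟨h4a, hFB4, hT4⟩ := factB4 B₄ hB4 h4'
    have hT4' : ∀ a, a ∈ B₄ → a ∉ T := fun a ha hT =>
      Finset.notMem_empty a (hT4 ▸ Finset.mem_inter.mpr ⟨ha, hT⟩)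
    have hFB4' : ∀ a, a ∈ F → a ∈ B₄ := fun a ha => hFB4 ha
    have hC1card : (B₄ ∩ X).card = (B₃ ∩ (X ∪ T)).card := by
      rw [Finset.inter_comm, h4a, Finset.inter_comm, h3']
    have hB1 : IsBasis rk ((B₃ \ (X ∪ T)) ∪ (B₄ ∩ X)) := by
      refine newBasis hrk hB3 (Finset.inter_subset_right.trans Finset.subset_union_left)
        hC1card ?_
      rw [rk_basis_subset hrk hB4 Finset.inter_subset_left, Finset.inter_comm, h4a, rkXT]
    have hB4sd : B₄ \ X = B₄ \ (X ∪ T) := by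
      ext a
      simp only [Finset.mem_sdiff, Finset.mem_union]
      have := hT4' a
      tauto
    have hC2card : (B₃ ∩ (X ∪ T)).card = (B₄ ∩ (X ∪ T)).card := by
      have e : B₄ ∩ (X ∪ T) = X ∩ B₄ := by
        ext a
        simp only [Finset.mem_inter, Finset.mem_union]
        have := hT4' a
        tauto
      rw [e, Finset.inter_comm B₃, h3', ← h4a, Finset.inter_comm]
    have hB2 : IsBasis rk ((B₄ \ X) ∪ (B₃ ∩ (X ∪ T))) := by
      rw [hB4sd]
      refine newBasis hrk hB4 Finset.inter_subset_right hC2card ?_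
      rw [rk_basis_subset hrk hB3 Finset.inter_subset_left, Finset.inter_comm, h3', rkXT]
    refine ⟨hB1, hB2, ?_, ?_⟩
    · have e : X ∩ ((B₃ \ (X ∪ T)) ∪ (B₄ ∩ X)) = X ∩ B₄ := by
        ext a
        simp only [Finset.mem_inter, Finset.mem_union, Finset.mem_sdiff]
        tauto
      rw [e, h4a]
    · have e : (X ∪ T ∪ F) ∩ ((B₄ \ X) ∪ (B₃ ∩ (X ∪ T))) = ((X ∪ T) ∩ B₃) ∪ F := by
        ext a
        simp only [Finset.mem_inter, Finset.mem_union, Finset.mem_sdiff]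
        have h1 := hFB4' a
        have h2 := hT4' a
        have h3 := hXF' (a := a)
        have h4 := hTF' (a := a)
        tauto
      have hd : Disjoint ((X ∪ T) ∩ B₃) F := by
        rw [Finset.disjoint_left]
        intro a ha hf
        rcases Finset.mem_union.mp (Finset.mem_inter.mp ha).1 with h | h
        · exact hXF' h hf
        · exact hTF' h hf
      rw [e, Finset.card_union_of_disjoint hd, h3', rkY]
  have hinv : Set.InvOn
      (fun p : Finset E × Finset E =>
        ((p.1 \ (X ∪ T)) ∪ (p.2 ∩ X), (p.2 \ X) ∪ (p.1 ∩ (X ∪ T))))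
      (fun p : Finset E × Finset E =>
        ((p.1 \ X) ∪ (p.2 ∩ (X ∪ T)), (p.2 \ (X ∪ T)) ∪ (p.1 ∩ X)))
      (BasisPairs rk X (X ∪ T ∪ F)) (BasisPairs rk (X ∪ T) (X ∪ F)) := by
    constructor
    · rintro ⟨B₁, B₂⟩ ⟨hB1, hB2, h1, h2⟩
      simp only at h1 ⊢
      have hT1 := factT B₁ hB1 h1.symm
      have hT1' : ∀ a, a ∈ B₁ → a ∉ T := fun a ha hT =>
        Finset.notMem_empty a (hT1 ▸ Finset.mem_inter.mpr ⟨ha, hT⟩)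
      refine Prod.ext ?_ ?_
      · ext a
        simp only [Finset.mem_union, Finset.mem_sdiff, Finset.mem_inter]
        have := hT1' a
        tauto
      · ext a
        simp only [Finset.mem_union, Finset.mem_sdiff, Finset.mem_inter]
        have := hT1' a
        tauto
    · rintro ⟨B₃, B₄⟩ ⟨hB3, hB4, h3, h4⟩
      simp only at h4 ⊢
      have h4' : ((X ∪ F) ∩ B₄).card = rk X + F.card := by rw [← h4, rkXF]
      obtain ⟨h4a, hFB4, hT4⟩ := factB4 B₄ hB4 h4'
      have hT4' : ∀ a, a ∈ B₄ → a ∉ T := fun a ha hT =>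
        Finset.notMem_empty a (hT4 ▸ Finset.mem_inter.mpr ⟨ha, hT⟩)
      refine Prod.ext ?_ ?_
      · ext a
        simp only [Finset.mem_union, Finset.mem_sdiff, Finset.mem_inter]
        have := hT4' a
        tauto
      · ext a
        simp only [Finset.mem_union, Finset.mem_sdiff, Finset.mem_inter]
        have := hT4' a
        tauto
  exact ⟨hinv.bijOn mapsφ mapsψ, hinv⟩
end
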